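/- Let n ≥ 1, s ∈ ℝ, g, φ ∈ 𝒮(ℝⁿ), N a nonnegative integer and M ≥ 0. Then there exists a constant C > 0 such that for every finitely supported sequence {c_ℓ}_{ℓ∈ℤⁿ} of complex numbers, setting f(t) = Σ_{ℓ∈ℤⁿ} c_ℓ φ(t − ℓ), one has ⟨x⟩^s |V_g f(x,ξ)| ≤ C ⟨ξ⟩^{−N} Σ_{ℓ∈ℤⁿ} ⟨ℓ⟩^s |c_ℓ| ⟨x − ℓ⟩^{−M + |s|} for all x, ξ ∈ ℝⁿ. -/

import Mathlib

open MeasureTheory Real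
open scoped ENNReal RealInnerProductSpace

noncomputable section

/-- The short-time Fourier transform
`V_g f (x, ξ) = ∫ e^{-i ξ·t} conj (g (t - x)) f t dt`. -/
def STFT {n : ℕ} (g f : EuclideanSpace ℝ (Fin n) → ℂ)
    (x ξ : EuclideanSpace ℝ (Fin n)) : ℂ :=
  ∫ t : EuclideanSpace ℝ (Fin n),
    Complex.exp (-(Complex.I * Complex.ofReal ⟪ξ, t⟫)) * (starRingEnd ℂ) (g (t - x)) * f t

/-- The Fourier transform `f̂ (ξ) = ∫ e^{-i ξ·x} f x dx`. -/
def FT {n : ℕ} (f : EuclideanSpace ℝ (Fin n) → ℂ) (ξ : EuclideanSpace ℝ (Fin n)) : ℂ :=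
  ∫ x : EuclideanSpace ℝ (Fin n),
    Complex.exp (-(Complex.I * Complex.ofReal ⟪ξ, x⟫)) * f x

/-- The power of the Japanese bracket `⟨x⟩ˢ = (1 + |x|²)^(s/2)`. -/
def jp {n : ℕ} (s : ℝ) (x : EuclideanSpace ℝ (Fin n)) : ℝ := (1 + ‖x‖ ^ 2) ^ (s / 2)

/-- The Gaussian window `g₀ (t) = e^{-|t|²}`. -/
def gauss {n : ℕ} (t : EuclideanSpace ℝ (Fin n)) : ℂ := Complex.ofReal (Real.exp (-‖t‖ ^ 2))

/-- The `L^p` norm (valued in `ℝ≥0∞`) of an `ℝ≥0∞`-valued function. -/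
def lpN {n : ℕ} (p : ℝ≥0∞) (F : EuclideanSpace ℝ (Fin n) → ℝ≥0∞) : ℝ≥0∞ :=
  if p = ∞ then essSup F volume
  else (∫⁻ x, F x ^ p.toReal) ^ p.toReal⁻¹

/-- The Wiener amalgam space norm `‖f‖_{W^s_{p,q}}`:
inner `L^q` norm in the frequency variable ξ, outer `L^p` norm in the space variable x,
with the Gaussian window. -/
def WNorm {n : ℕ} (s : ℝ) (p q : ℝ≥0∞) (f : EuclideanSpace ℝ (Fin n) → ℂ) : ℝ≥0∞ :=
  lpN p (fun x => lpN q (fun ξ => ENNReal.ofReal (jp s ξ) * (‖STFT gauss f x ξ‖₊ : ℝ≥0∞)))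

/-- The modulation space norm `‖f‖_{M^s_{p,q}}`:
inner `L^p` norm in the space variable x, outer `L^q` norm in the frequency variable ξ,
with the Gaussian window. -/
def MNorm {n : ℕ} (s : ℝ) (p q : ℝ≥0∞) (f : EuclideanSpace ℝ (Fin n) → ℂ) : ℝ≥0∞ :=
  lpN q (fun ξ => lpN p (fun x => ENNReal.ofReal (jp s ξ) * (‖STFT gauss f x ξ‖₊ : ℝ≥0∞)))

/-- The Schrödinger operator `e^{iεΔ} f = ℱ⁻¹ [ξ ↦ e^{-iε|ξ|²} f̂ (ξ)]` (`ε = ±1`). -/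
def schrod {n : ℕ} (ε : ℝ) (f : EuclideanSpace ℝ (Fin n) → ℂ)
    (x : EuclideanSpace ℝ (Fin n)) : ℂ :=
  (((2 * Real.pi) ^ n)⁻¹ : ℝ) *
    ∫ ξ : EuclideanSpace ℝ (Fin n),
      Complex.exp (Complex.I * Complex.ofReal ⟪x, ξ⟫) *
        Complex.exp (-(Complex.ofReal ε * Complex.I * Complex.ofReal (‖ξ‖ ^ 2))) * FT f ξ

/-- The lattice point `k ∈ ℤⁿ` viewed as a point of `ℝⁿ`. -/
def zlift {n : ℕ} (k : Fin n → ℤ) : EuclideanSpace ℝ (Fin n) :=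
  (WithLp.equiv 2 (Fin n → ℝ)).symm fun i => (k i : ℝ)


-- auxiliary development
section Aux

open SchwartzMap
open scoped FourierTransform ContDiff

variable {n : ℕ}

private lemma iteratedFDeriv_comp_add_right'' {E F : Type*} [NormedAddCommGroup E]
    [NormedSpace ℝ E] [NormedAddCommGroup F] [NormedSpace ℝ F]
    (f : E → F) (hf : ContDiff ℝ (⊤ : ℕ∞) f) (c : E) (m : ℕ)
    (t : E) : iteratedFDeriv ℝ m (fun y => f (y + c)) t = iteratedFDeriv ℝ m f (t + c) := by
  induction m generalizing t with
  | zero =>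
    ext v
    simp [iteratedFDeriv_zero_apply]
  | succ k ih =>
    have h1 : iteratedFDeriv ℝ k (fun y => f (y + c)) =
        fun y => iteratedFDeriv ℝ k f (y + c) := funext ih
    rw [iteratedFDeriv_succ_eq_comp_left, iteratedFDeriv_succ_eq_comp_left]
    simp only [Function.comp_apply]
    congr 1
    rw [h1]
    have hd : DifferentiableAt ℝ (iteratedFDeriv ℝ k f) (t + c) := by
      apply (hf.differentiable_iteratedFDeriv ?_).differentiableAt
      exact_mod_cast ENat.coe_lt_top k
    have h2 : HasFDerivAt (fun y => iteratedFDeriv ℝ k f (y + c))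
        (fderiv ℝ (iteratedFDeriv ℝ k f) (t + c)) t := by
      have := hd.hasFDerivAt.comp t ((hasFDerivAt_id t).add_const c)
      exact this
    exact h2.fderiv

private lemma conj_shift_iFD (g : 𝓢(EuclideanSpace ℝ (Fin n), ℂ))
    (x t : EuclideanSpace ℝ (Fin n)) (i : ℕ) :
    ‖iteratedFDeriv ℝ i (fun y => (starRingEnd ℂ) (g (y - x))) t‖ =
      ‖iteratedFDeriv ℝ i (⇑g) (t - x)‖ := by
  have h1 : (fun y => (starRingEnd ℂ) (g (y - x))) =
      ⇑Complex.conjLIE ∘ (fun y => g (y + (-x))) := by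
    funext y; simp [Complex.conjLIE_apply, sub_eq_add_neg]
  rw [h1, Complex.conjLIE.norm_iteratedFDeriv_comp_left,
    iteratedFDeriv_comp_add_right'' (⇑g) (g.smooth ⊤) (-x) i t, sub_eq_add_neg]

private lemma contDiff_conj_shift (g : 𝓢(EuclideanSpace ℝ (Fin n), ℂ))
    (x : EuclideanSpace ℝ (Fin n)) :
    ContDiff ℝ ((⊤ : ℕ∞) : WithTop ℕ∞)
      (fun y : EuclideanSpace ℝ (Fin n) => (starRingEnd ℂ) (g (y - x))) := by
  have : (fun y : EuclideanSpace ℝ (Fin n) => (starRingEnd ℂ) (g (y - x))) =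
      ⇑Complex.conjCLE ∘ (⇑g ∘ (fun y => y - x)) := by
    funext y; simp
  rw [this]
  exact Complex.conjCLE.toContinuousLinearMap.contDiff.comp
    ((g.smooth ⊤).comp (contDiff_id.sub contDiff_const))

private lemma one_add_norm_ineq (x t : EuclideanSpace ℝ (Fin n)) :
    1 + ‖x‖ ≤ (1 + ‖t - x‖) * (1 + ‖t‖) := by
  have h : ‖x‖ ≤ ‖t - x‖ + ‖t‖ := by
    calc ‖x‖ = ‖(t - x) - t‖ := by rw [norm_sub_rev]; congr 1; abel
    _ ≤ ‖t - x‖ + ‖t‖ := norm_sub_le _ _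
  have h1 : (0:ℝ) ≤ ‖t - x‖ := norm_nonneg _
  have h2 : (0:ℝ) ≤ ‖t‖ := norm_nonneg _
  nlinarith

private lemma Hx_bound (g φ : 𝓢(EuclideanSpace ℝ (Fin n), ℂ)) (D k m : ℕ) :
    ∃ C : ℝ, 0 < C ∧ ∀ x t : EuclideanSpace ℝ (Fin n),
      (1 + ‖x‖) ^ D * ((1 + ‖t‖) ^ k *
        ‖iteratedFDeriv ℝ m (fun y => (starRingEnd ℂ) (g (y - x)) * φ y) t‖) ≤ C := by
  set Cg : ℝ := 2 ^ D * (Finset.Iic (D, m)).sup (fun p => SchwartzMap.seminorm ℝ p.1 p.2) g with hCg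
  set Cφ : ℝ := 2 ^ (D + k) * (Finset.Iic (D + k, m)).sup
    (fun p => SchwartzMap.seminorm ℝ p.1 p.2) φ with hCφ
  have hCg0 : 0 ≤ Cg := by positivity
  have hCφ0 : 0 ≤ Cφ := by positivity
  refine ⟨2 ^ m * Cg * Cφ + 1, by positivity, fun x t => ?_⟩
  have hmul := norm_iteratedFDeriv_mul_le (𝕜 := ℝ)
    (contDiff_conj_shift g x) (φ.smooth (⊤ : ℕ∞)) t (by exact_mod_cast le_top (a := (m : ℕ∞)))
  have key : ∀ i ∈ Finset.range (m + 1),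
      (1 + ‖x‖) ^ D * ((1 + ‖t‖) ^ k *
        ((m.choose i : ℝ) * ‖iteratedFDeriv ℝ i (fun y => (starRingEnd ℂ) (g (y - x))) t‖ *
          ‖iteratedFDeriv ℝ (m - i) (⇑φ) t‖)) ≤ (m.choose i : ℝ) * (Cg * Cφ) := by
    intro i hi
    simp only [Finset.mem_range, Nat.lt_succ_iff] at hi
    rw [conj_shift_iFD]
    have hg' : (1 + ‖t - x‖) ^ D * ‖iteratedFDeriv ℝ i (⇑g) (t - x)‖ ≤ Cg :=
      one_add_le_sup_seminorm_apply (m := (D, m)) le_rfl hi g (t - x)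
    have hφ' : (1 + ‖t‖) ^ (D + k) * ‖iteratedFDeriv ℝ (m - i) (⇑φ) t‖ ≤ Cφ :=
      one_add_le_sup_seminorm_apply (m := (D + k, m)) le_rfl (Nat.sub_le m i) φ t
    have hx : (1 + ‖x‖) ^ D ≤ (1 + ‖t - x‖) ^ D * (1 + ‖t‖) ^ D := by
      rw [← mul_pow]
      exact pow_le_pow_left₀ (by positivity) (one_add_norm_ineq x t) D
    calc (1 + ‖x‖) ^ D * ((1 + ‖t‖) ^ k *
          ((m.choose i : ℝ) * ‖iteratedFDeriv ℝ i (⇑g) (t - x)‖ *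
            ‖iteratedFDeriv ℝ (m - i) (⇑φ) t‖))
        ≤ ((1 + ‖t - x‖) ^ D * (1 + ‖t‖) ^ D) * ((1 + ‖t‖) ^ k *
          ((m.choose i : ℝ) * ‖iteratedFDeriv ℝ i (⇑g) (t - x)‖ *
            ‖iteratedFDeriv ℝ (m - i) (⇑φ) t‖)) := by
          have : (0:ℝ) ≤ (1 + ‖t‖) ^ k *
            ((m.choose i : ℝ) * ‖iteratedFDeriv ℝ i (⇑g) (t - x)‖ *
              ‖iteratedFDeriv ℝ (m - i) (⇑φ) t‖) := by positivity
          exact mul_le_mul_of_nonneg_right hx this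
      _ = (m.choose i : ℝ) * (((1 + ‖t - x‖) ^ D * ‖iteratedFDeriv ℝ i (⇑g) (t - x)‖) *
            ((1 + ‖t‖) ^ (D + k) * ‖iteratedFDeriv ℝ (m - i) (⇑φ) t‖)) := by
          rw [pow_add]; ring
      _ ≤ (m.choose i : ℝ) * (Cg * Cφ) := by
          apply mul_le_mul_of_nonneg_left _ (by positivity)
          exact mul_le_mul hg' hφ' (by positivity) (le_trans (by positivity) hg')
  calc (1 + ‖x‖) ^ D * ((1 + ‖t‖) ^ k *
        ‖iteratedFDeriv ℝ m (fun y => (starRingEnd ℂ) (g (y - x)) * φ y) t‖)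
      ≤ (1 + ‖x‖) ^ D * ((1 + ‖t‖) ^ k *
        ∑ i ∈ Finset.range (m + 1), (m.choose i : ℝ) *
          ‖iteratedFDeriv ℝ i (fun y => (starRingEnd ℂ) (g (y - x))) t‖ *
          ‖iteratedFDeriv ℝ (m - i) (⇑φ) t‖) := by
        apply mul_le_mul_of_nonneg_left _ (by positivity)
        exact mul_le_mul_of_nonneg_left hmul (by positivity)
    _ = ∑ i ∈ Finset.range (m + 1), (1 + ‖x‖) ^ D * ((1 + ‖t‖) ^ k *
          ((m.choose i : ℝ) * ‖iteratedFDeriv ℝ i (fun y => (starRingEnd ℂ) (g (y - x))) t‖ *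
            ‖iteratedFDeriv ℝ (m - i) (⇑φ) t‖)) := by
        rw [Finset.mul_sum, Finset.mul_sum]
    _ ≤ ∑ i ∈ Finset.range (m + 1), (m.choose i : ℝ) * (Cg * Cφ) :=
        Finset.sum_le_sum key
    _ = 2 ^ m * Cg * Cφ := by
        rw [← Finset.sum_mul]
        norm_cast
        rw [Nat.sum_range_choose]
        ring
    _ ≤ 2 ^ m * Cg * Cφ + 1 := by linarith

/-- The window-localized product as a Schwartz map. -/
private def Hmap (g φ : 𝓢(EuclideanSpace ℝ (Fin n), ℂ)) (x : EuclideanSpace ℝ (Fin n)) :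
    𝓢(EuclideanSpace ℝ (Fin n), ℂ) where
  toFun t := (starRingEnd ℂ) (g (t - x)) * φ t
  smooth' := by
    exact_mod_cast (contDiff_conj_shift g x).mul
      ((φ.smooth (⊤ : ℕ∞)) : ContDiff ℝ ((⊤ : ℕ∞) : WithTop ℕ∞) (⇑φ))
  decay' := by
    intro k m
    obtain ⟨C, hC0, hC⟩ := Hx_bound g φ 0 k m
    refine ⟨C, fun t => ?_⟩
    have h := hC x t
    simp only [pow_zero, one_mul] at h
    refine le_trans ?_ h
    have h1 : ‖t‖ ^ k ≤ (1 + ‖t‖) ^ k :=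
      pow_le_pow_left₀ (norm_nonneg t) (by linarith [norm_nonneg t]) k
    exact mul_le_mul_of_nonneg_right h1 (norm_nonneg _)

private lemma Hmap_apply (g φ : 𝓢(EuclideanSpace ℝ (Fin n), ℂ))
    (x t : EuclideanSpace ℝ (Fin n)) :
    Hmap g φ x t = (starRingEnd ℂ) (g (t - x)) * φ t := rfl

private lemma Hmap_seminorm_bound (g φ : 𝓢(EuclideanSpace ℝ (Fin n), ℂ)) (D a b : ℕ) :
    ∃ C : ℝ, 0 < C ∧ ∀ x : EuclideanSpace ℝ (Fin n),
      SchwartzMap.seminorm ℝ a b (Hmap g φ x) * (1 + ‖x‖) ^ D ≤ C := by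
  obtain ⟨C, hC0, hC⟩ := Hx_bound g φ D a b
  refine ⟨C, hC0, fun x => ?_⟩
  have hxp : (0:ℝ) < (1 + ‖x‖) ^ D := by positivity
  rw [← le_div_iff₀ hxp]
  apply SchwartzMap.seminorm_le_bound
  · positivity
  intro t
  rw [le_div_iff₀ hxp]
  have h := hC x t
  have h1 : ‖t‖ ^ a ≤ (1 + ‖t‖) ^ a :=
    pow_le_pow_left₀ (norm_nonneg t) (by linarith [norm_nonneg t]) a
  calc ‖t‖ ^ a * ‖iteratedFDeriv ℝ b (⇑(Hmap g φ x)) t‖ * (1 + ‖x‖) ^ D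
      ≤ (1 + ‖t‖) ^ a * ‖iteratedFDeriv ℝ b (⇑(Hmap g φ x)) t‖ * (1 + ‖x‖) ^ D := by
        have : (0:ℝ) ≤ ‖iteratedFDeriv ℝ b (⇑(Hmap g φ x)) t‖ := norm_nonneg _
        apply mul_le_mul_of_nonneg_right _ (le_of_lt hxp)
        exact mul_le_mul_of_nonneg_right h1 this
    _ = (1 + ‖x‖) ^ D * ((1 + ‖t‖) ^ a *
        ‖iteratedFDeriv ℝ b (fun y => (starRingEnd ℂ) (g (y - x)) * φ y) t‖) := by
        ring_nf
        rfl
    _ ≤ C := h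

private lemma fourier_seminorm_bound (a b : ℕ) :
    ∃ (σ : Finset (ℕ × ℕ)) (C : ℝ), 0 < C ∧ ∀ f : 𝓢(EuclideanSpace ℝ (Fin n), ℂ),
      SchwartzMap.seminorm ℝ a b (SchwartzMap.fourierTransformCLM ℝ f) ≤
        C * ∑ p ∈ σ, SchwartzMap.seminorm ℝ p.1 p.2 f := by
  set T := (SchwartzMap.fourierTransformCLM ℝ (V := EuclideanSpace ℝ (Fin n)) (E := ℂ))
  set q : Seminorm ℝ 𝓢(EuclideanSpace ℝ (Fin n), ℂ) :=
    (schwartzSeminormFamily ℝ (EuclideanSpace ℝ (Fin n)) ℂ (a, b)).comp T.toLinearMap with hq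
  have hqc : Continuous q := by
    have h1 : Continuous (schwartzSeminormFamily ℝ (EuclideanSpace ℝ (Fin n)) ℂ (a, b)) :=
      (schwartz_withSeminorms ℝ (EuclideanSpace ℝ (Fin n)) ℂ).continuous_seminorm (a, b)
    exact h1.comp T.continuous
  obtain ⟨σ, C₀, hC₀, hle⟩ := Seminorm.bound_of_continuous
    (schwartz_withSeminorms ℝ (EuclideanSpace ℝ (Fin n)) ℂ) q hqc
  refine ⟨σ, (C₀ : ℝ) + 1, by positivity, fun f => ?_⟩
  have h1 : q f ≤ (C₀ : ℝ) *
      (σ.sup (schwartzSeminormFamily ℝ (EuclideanSpace ℝ (Fin n)) ℂ)) f := by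
    have := hle f
    simpa [NNReal.smul_def] using this
  have h2 : (σ.sup (schwartzSeminormFamily ℝ (EuclideanSpace ℝ (Fin n)) ℂ)) f ≤
      ∑ p ∈ σ, SchwartzMap.seminorm ℝ p.1 p.2 f := by
    apply Seminorm.finset_sup_apply_le
    · exact Finset.sum_nonneg fun p _ => apply_nonneg (SchwartzMap.seminorm ℝ p.1 p.2) _
    intro p hp
    exact Finset.single_le_sum
      (fun r (_ : r ∈ σ) => apply_nonneg (SchwartzMap.seminorm ℝ r.1 r.2) f) hp
  calc SchwartzMap.seminorm ℝ a b (T f) = q f := rfl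
    _ ≤ (C₀ : ℝ) * (σ.sup (schwartzSeminormFamily ℝ (EuclideanSpace ℝ (Fin n)) ℂ)) f := h1
    _ ≤ (C₀ : ℝ) * ∑ p ∈ σ, SchwartzMap.seminorm ℝ p.1 p.2 f := by
        exact mul_le_mul_of_nonneg_left h2 (NNReal.coe_nonneg C₀)
    _ ≤ ((C₀ : ℝ) + 1) * ∑ p ∈ σ, SchwartzMap.seminorm ℝ p.1 p.2 f := by
        apply mul_le_mul_of_nonneg_right (by linarith) ?_
        exact Finset.sum_nonneg fun p _ => apply_nonneg (SchwartzMap.seminorm ℝ p.1 p.2) _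

private lemma FHx_seminorm_bound (g φ : 𝓢(EuclideanSpace ℝ (Fin n), ℂ)) (D a b : ℕ) :
    ∃ C : ℝ, 0 < C ∧ ∀ x : EuclideanSpace ℝ (Fin n),
      SchwartzMap.seminorm ℝ a b (SchwartzMap.fourierTransformCLM ℝ (Hmap g φ x)) *
        (1 + ‖x‖) ^ D ≤ C := by
  obtain ⟨σ, C₀, hC₀, hC⟩ := fourier_seminorm_bound (n := n) a b
  choose Cf hCf0 hCf using fun p : ℕ × ℕ => Hmap_seminorm_bound g φ D p.1 p.2
  have hsum0 : (0:ℝ) ≤ ∑ p ∈ σ, Cf p := Finset.sum_nonneg fun p _ => (hCf0 p).le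
  refine ⟨C₀ * ∑ p ∈ σ, Cf p + 1, by positivity, fun x => ?_⟩
  have h1 := hC (Hmap g φ x)
  have hxp : (0:ℝ) ≤ (1 + ‖x‖) ^ D := by positivity
  calc SchwartzMap.seminorm ℝ a b (SchwartzMap.fourierTransformCLM ℝ (Hmap g φ x)) *
        (1 + ‖x‖) ^ D
      ≤ (C₀ * ∑ p ∈ σ, SchwartzMap.seminorm ℝ p.1 p.2 (Hmap g φ x)) * (1 + ‖x‖) ^ D :=
        mul_le_mul_of_nonneg_right h1 hxp
    _ = C₀ * ∑ p ∈ σ, SchwartzMap.seminorm ℝ p.1 p.2 (Hmap g φ x) * (1 + ‖x‖) ^ D := by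
        rw [mul_assoc, Finset.sum_mul]
    _ ≤ C₀ * ∑ p ∈ σ, Cf p := by
        apply mul_le_mul_of_nonneg_left _ (le_of_lt hC₀)
        exact Finset.sum_le_sum fun p _ => hCf p x
    _ ≤ C₀ * ∑ p ∈ σ, Cf p + 1 := by linarith

private lemma stft_eq_fourier (g φ : 𝓢(EuclideanSpace ℝ (Fin n), ℂ))
    (x ξ : EuclideanSpace ℝ (Fin n)) :
    STFT (⇑g) (⇑φ) x ξ = 𝓕 (⇑(Hmap g φ x)) ((2 * π)⁻¹ • ξ) := by
  rw [Real.fourier_eq]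
  unfold STFT
  congr 1
  funext t
  rw [Hmap_apply, Circle.smul_def, Real.fourierChar_apply, real_inner_smul_right]
  have h1 : 2 * π * -((2 * π)⁻¹ * ⟪t, ξ⟫) = -⟪t, ξ⟫ := by
    have hπ : (2 * π) ≠ 0 := by positivity
    field_simp
  rw [h1]
  have h2 : ((-⟪t, ξ⟫ : ℝ) : ℂ) * Complex.I = -(Complex.I * (⟪ξ, t⟫ : ℝ)) := by
    rw [real_inner_comm t ξ]; push_cast; ring
  rw [smul_eq_mul, h2, mul_assoc]

private lemma core_decay (g φ : 𝓢(EuclideanSpace ℝ (Fin n), ℂ)) (N D : ℕ) :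
    ∃ C : ℝ, 0 < C ∧ ∀ x ξ : EuclideanSpace ℝ (Fin n),
      (1 + ‖x‖) ^ D * ((1 + ‖ξ‖) ^ N * ‖STFT (⇑g) (⇑φ) x ξ‖) ≤ C := by
  choose Cf hCf0 hCf using fun p : ℕ × ℕ => FHx_seminorm_bound g φ D p.1 p.2
  set σ : Finset (ℕ × ℕ) := Finset.Iic (N, 0) with hσ
  have hsum0 : (0:ℝ) ≤ ∑ p ∈ σ, Cf p := Finset.sum_nonneg fun p _ => (hCf0 p).le
  refine ⟨(2 * π) ^ N * (2 ^ N * ∑ p ∈ σ, Cf p) + 1, by positivity, fun x ξ => ?_⟩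
  set w : EuclideanSpace ℝ (Fin n) := (2 * π)⁻¹ • ξ with hw
  set T := SchwartzMap.fourierTransformCLM ℝ (V := EuclideanSpace ℝ (Fin n)) (E := ℂ)
  have hξw : (1 + ‖ξ‖) ≤ (2 * π) * (1 + ‖w‖) := by
    have h1 : ‖w‖ = (2 * π)⁻¹ * ‖ξ‖ := by
      rw [hw, norm_smul, Real.norm_eq_abs, abs_of_pos (by positivity)]
    have hπ : (1:ℝ) ≤ 2 * π := by nlinarith [Real.pi_gt_three]
    have h2 : (2 * π) * ‖w‖ = ‖ξ‖ := by
      rw [h1]; field_simp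
    nlinarith [norm_nonneg w]
  have hone : (1 + ‖w‖) ^ N * ‖𝓕 (⇑(Hmap g φ x)) w‖ ≤
      2 ^ N * σ.sup (fun m => SchwartzMap.seminorm ℝ m.1 m.2) (T (Hmap g φ x)) := by
    have h0 := SchwartzMap.one_add_le_sup_seminorm_apply (𝕜 := ℝ) (m := ((N : ℕ), (0 : ℕ)))
      (k := N) (n := 0) le_rfl le_rfl (T (Hmap g φ x)) w
    rwa [norm_iteratedFDeriv_zero, SchwartzMap.fourierTransformCLM_apply] at h0
  have hsup : σ.sup (fun m => SchwartzMap.seminorm ℝ m.1 m.2) (T (Hmap g φ x)) *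
      (1 + ‖x‖) ^ D ≤ ∑ p ∈ σ, Cf p := by
    have h2 : σ.sup (fun m => SchwartzMap.seminorm ℝ m.1 m.2) (T (Hmap g φ x)) ≤
        ∑ p ∈ σ, SchwartzMap.seminorm ℝ p.1 p.2 (T (Hmap g φ x)) := by
      apply Seminorm.finset_sup_apply_le
      · exact Finset.sum_nonneg fun p _ => apply_nonneg (SchwartzMap.seminorm ℝ p.1 p.2) _
      intro p hp
      exact Finset.single_le_sum
        (fun r (_ : r ∈ σ) => apply_nonneg (SchwartzMap.seminorm ℝ r.1 r.2) (T (Hmap g φ x))) hp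
    calc σ.sup (fun m => SchwartzMap.seminorm ℝ m.1 m.2) (T (Hmap g φ x)) * (1 + ‖x‖) ^ D
        ≤ (∑ p ∈ σ, SchwartzMap.seminorm ℝ p.1 p.2 (T (Hmap g φ x))) * (1 + ‖x‖) ^ D :=
          mul_le_mul_of_nonneg_right h2 (by positivity)
      _ = ∑ p ∈ σ, SchwartzMap.seminorm ℝ p.1 p.2 (T (Hmap g φ x)) * (1 + ‖x‖) ^ D := by
          rw [Finset.sum_mul]
      _ ≤ ∑ p ∈ σ, Cf p := Finset.sum_le_sum fun p _ => hCf p x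
  have hnormF : ‖STFT (⇑g) (⇑φ) x ξ‖ = ‖𝓕 (⇑(Hmap g φ x)) w‖ := by
    rw [stft_eq_fourier]
  calc (1 + ‖x‖) ^ D * ((1 + ‖ξ‖) ^ N * ‖STFT (⇑g) (⇑φ) x ξ‖)
      ≤ (1 + ‖x‖) ^ D * (((2 * π) * (1 + ‖w‖)) ^ N * ‖𝓕 (⇑(Hmap g φ x)) w‖) := by
        rw [hnormF]
        have hp : (1 + ‖ξ‖) ^ N ≤ ((2 * π) * (1 + ‖w‖)) ^ N :=
          pow_le_pow_left₀ (by positivity) hξw N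
        exact mul_le_mul_of_nonneg_left
          (mul_le_mul_of_nonneg_right hp (norm_nonneg _)) (by positivity)
    _ = (2 * π) ^ N * ((1 + ‖w‖) ^ N * ‖𝓕 (⇑(Hmap g φ x)) w‖ * (1 + ‖x‖) ^ D) := by
        rw [mul_pow]; ring
    _ ≤ (2 * π) ^ N * (2 ^ N *
          σ.sup (fun m => SchwartzMap.seminorm ℝ m.1 m.2) (T (Hmap g φ x)) * (1 + ‖x‖) ^ D) := by
        apply mul_le_mul_of_nonneg_left _ (by positivity)
        exact mul_le_mul_of_nonneg_right hone (by positivity)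
    _ ≤ (2 * π) ^ N * (2 ^ N * ∑ p ∈ σ, Cf p) := by
        apply mul_le_mul_of_nonneg_left _ (by positivity)
        rw [mul_assoc]
        exact mul_le_mul_of_nonneg_left hsup (by positivity)
    _ ≤ (2 * π) ^ N * (2 ^ N * ∑ p ∈ σ, Cf p) + 1 := by linarith

end Aux


section Aux2

open SchwartzMap
open scoped FourierTransform ContDiff

variable {n : ℕ}

private lemma jp_base_pos (x : EuclideanSpace ℝ (Fin n)) : (0:ℝ) < 1 + ‖x‖ ^ 2 := by positivity

private lemma jp_base_one_le (x : EuclideanSpace ℝ (Fin n)) : (1:ℝ) ≤ 1 + ‖x‖ ^ 2 := by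
  nlinarith [sq_nonneg ‖x‖]

private lemma jp_pos (s : ℝ) (x : EuclideanSpace ℝ (Fin n)) : 0 < jp s x :=
  Real.rpow_pos_of_pos (jp_base_pos x) _

private lemma jp_mul (a b : ℝ) (x : EuclideanSpace ℝ (Fin n)) :
    jp a x * jp b x = jp (a + b) x := by
  unfold jp
  rw [← Real.rpow_add (jp_base_pos x), add_div]

private lemma jp_zero' (x : EuclideanSpace ℝ (Fin n)) : jp 0 x = 1 := by
  unfold jp; rw [zero_div, Real.rpow_zero]

private lemma jp_mono (x : EuclideanSpace ℝ (Fin n)) {a b : ℝ} (h : a ≤ b) : jp a x ≤ jp b x :=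
  Real.rpow_le_rpow_of_exponent_le (jp_base_one_le x) (by linarith)

private lemma jp_nat_le (N : ℕ) (x : EuclideanSpace ℝ (Fin n)) :
    jp (N : ℝ) x ≤ (1 + ‖x‖) ^ N := by
  unfold jp
  have h1 : 1 + ‖x‖ ^ 2 ≤ (1 + ‖x‖) ^ 2 := by nlinarith [norm_nonneg x]
  have h2 : ((1 + ‖x‖ ^ 2) : ℝ) ^ ((N : ℝ) / 2) ≤ ((1 + ‖x‖) ^ 2) ^ ((N : ℝ) / 2) :=
    Real.rpow_le_rpow (by positivity) h1 (by positivity)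
  refine h2.trans_eq ?_
  rw [← Real.rpow_natCast (1 + ‖x‖) 2, ← Real.rpow_mul (by positivity),
    show ((2:ℕ):ℝ) * ((N:ℝ)/2) = (N:ℝ) by push_cast; ring, Real.rpow_natCast]

private lemma inv_pow_le_jp_neg (N : ℕ) (x : EuclideanSpace ℝ (Fin n)) :
    ((1 + ‖x‖) ^ N)⁻¹ ≤ jp (-(N : ℝ)) x := by
  have h1 : jp (-(N:ℝ)) x = (jp (N:ℝ) x)⁻¹ := by
    unfold jp
    rw [neg_div, Real.rpow_neg (jp_base_pos x).le]
  rw [h1]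
  exact inv_anti₀ (jp_pos _ _) (jp_nat_le N x)

private lemma jp_peetre_nonneg {s : ℝ} (hs : 0 ≤ s) (x y : EuclideanSpace ℝ (Fin n)) :
    jp s x ≤ 2 ^ (s / 2) * jp s y * jp s (x - y) := by
  have key : 1 + ‖x‖ ^ 2 ≤ 2 * (1 + ‖y‖ ^ 2) * (1 + ‖x - y‖ ^ 2) := by
    have h : ‖x‖ ≤ ‖y‖ + ‖x - y‖ := by
      calc ‖x‖ = ‖y + (x - y)‖ := by congr 1; abel
        _ ≤ ‖y‖ + ‖x - y‖ := norm_add_le _ _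
    nlinarith [norm_nonneg x, norm_nonneg y, norm_nonneg (x - y), sq_nonneg (‖y‖ - ‖x - y‖),
      sq_nonneg (‖y‖ * ‖x - y‖)]
  have h2 : jp s x ≤ (2 * (1 + ‖y‖ ^ 2) * (1 + ‖x - y‖ ^ 2)) ^ (s / 2) :=
    Real.rpow_le_rpow (by positivity) key (by positivity)
  refine h2.trans_eq ?_
  rw [Real.mul_rpow (by positivity) (by positivity),
    Real.mul_rpow (by positivity) (by positivity)]
  rfl

private lemma jp_peetre (s : ℝ) (x y : EuclideanSpace ℝ (Fin n)) :
    jp s x ≤ 2 ^ (|s| / 2) * jp s y * jp |s| (x - y) := by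
  rcases le_or_gt 0 s with hs | hs
  · rw [abs_of_nonneg hs]
    exact jp_peetre_nonneg hs x y
  · have hs' : 0 ≤ -s := by linarith
    rw [abs_of_neg hs]
    have h2 : jp (-s) y ≤ 2 ^ (-s / 2) * jp (-s) x * jp (-s) (y - x) :=
      jp_peetre_nonneg hs' y x
    have h3 : jp (-s) (y - x) = jp (-s) (x - y) := by
      unfold jp; rw [norm_sub_rev]
    rw [h3] at h2
    calc jp s x = (jp s x * jp s y) * jp (-s) y := by
          rw [mul_assoc, jp_mul, add_neg_cancel, jp_zero', mul_one]
      _ ≤ (jp s x * jp s y) * (2 ^ (-s / 2) * jp (-s) x * jp (-s) (x - y)) := by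
          exact mul_le_mul_of_nonneg_left h2 (mul_nonneg (jp_pos s x).le (jp_pos s y).le)
      _ = 2 ^ (-s / 2) * jp s y * jp (-s) (x - y) * (jp s x * jp (-s) x) := by ring
      _ = 2 ^ (-s / 2) * jp s y * jp (-s) (x - y) := by
          rw [jp_mul, add_neg_cancel, jp_zero', mul_one]

private lemma norm_exp_inner (r : ℝ) : ‖Complex.exp (-(Complex.I * (r : ℂ)))‖ = 1 := by
  rw [Complex.norm_exp]
  simp

private lemma integrable_term (g φ : 𝓢(EuclideanSpace ℝ (Fin n), ℂ))
    (x y ξ : EuclideanSpace ℝ (Fin n)) (a : ℂ) :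
    MeasureTheory.Integrable (fun t : EuclideanSpace ℝ (Fin n) =>
      a * (Complex.exp (-(Complex.I * Complex.ofReal ⟪ξ, t⟫)) *
        (starRingEnd ℂ) (g (t - x)) * φ (t - y))) MeasureTheory.volume := by
  have hgint : MeasureTheory.Integrable (fun t : EuclideanSpace ℝ (Fin n) => g (t - x))
      MeasureTheory.volume := (SchwartzMap.integrable g).comp_sub_right x
  set Cφ : ℝ := SchwartzMap.seminorm ℝ 0 0 φ with hCφ
  apply MeasureTheory.Integrable.mono' ((hgint.norm).const_mul (‖a‖ * Cφ))
  · apply Continuous.aestronglyMeasurable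
    have he : Continuous fun t : EuclideanSpace ℝ (Fin n) =>
        Complex.exp (-(Complex.I * Complex.ofReal ⟪ξ, t⟫)) := by
      apply Complex.continuous_exp.comp
      exact (continuous_const.mul (Complex.continuous_ofReal.comp
        ((continuous_const (y := ξ)).inner continuous_id))).neg
    have hcg : Continuous fun t : EuclideanSpace ℝ (Fin n) => (starRingEnd ℂ) (g (t - x)) :=
      continuous_star.comp (g.continuous.comp (continuous_id.sub continuous_const))
    have hφ : Continuous fun t : EuclideanSpace ℝ (Fin n) => φ (t - y) :=
      φ.continuous.comp (continuous_id.sub continuous_const)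
    exact continuous_const.mul ((he.mul hcg).mul hφ)
  · refine MeasureTheory.ae_of_all _ fun t => ?_
    rw [norm_mul, norm_mul, norm_mul, norm_exp_inner, one_mul]
    have h1 : ‖φ (t - y)‖ ≤ Cφ := SchwartzMap.norm_le_seminorm ℝ φ (t - y)
    have h2 : ‖(starRingEnd ℂ) (g (t - x))‖ = ‖g (t - x)‖ := RCLike.norm_conj _
    rw [h2]
    calc ‖a‖ * (‖g (t - x)‖ * ‖φ (t - y)‖) ≤ ‖a‖ * (‖g (t - x)‖ * Cφ) := by
          apply mul_le_mul_of_nonneg_left _ (norm_nonneg a)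
          exact mul_le_mul_of_nonneg_left h1 (norm_nonneg _)
      _ = ‖a‖ * Cφ * ‖g (t - x)‖ := by ring

private lemma STFT_shift (g φ : 𝓢(EuclideanSpace ℝ (Fin n), ℂ))
    (x y ξ : EuclideanSpace ℝ (Fin n)) :
    STFT (⇑g) (fun t => φ (t - y)) x ξ =
      Complex.exp (-(Complex.I * Complex.ofReal ⟪ξ, y⟫)) * STFT (⇑g) (⇑φ) (x - y) ξ := by
  unfold STFT
  rw [← MeasureTheory.integral_add_right_eq_self (μ := MeasureTheory.volume)
    (fun t : EuclideanSpace ℝ (Fin n) =>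
      Complex.exp (-(Complex.I * Complex.ofReal ⟪ξ, t⟫)) *
        (starRingEnd ℂ) (g (t - x)) * φ (t - y)) y]
  have h : ∀ t : EuclideanSpace ℝ (Fin n),
      Complex.exp (-(Complex.I * Complex.ofReal ⟪ξ, t + y⟫)) *
        (starRingEnd ℂ) (g (t + y - x)) * φ (t + y - y) =
      Complex.exp (-(Complex.I * Complex.ofReal ⟪ξ, y⟫)) *
        (Complex.exp (-(Complex.I * Complex.ofReal ⟪ξ, t⟫)) *
          (starRingEnd ℂ) (g (t - (x - y))) * φ t) := by
    intro t
    rw [inner_add_right, show t + y - x = t - (x - y) by abel, add_sub_cancel_right,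
      Complex.ofReal_add,
      show -(Complex.I * ((⟪ξ, t⟫ : ℝ) + (⟪ξ, y⟫ : ℝ) : ℂ)) =
        -(Complex.I * ((⟪ξ, y⟫ : ℝ) : ℂ)) + -(Complex.I * ((⟪ξ, t⟫ : ℝ) : ℂ)) by ring,
      Complex.exp_add]
    ring
  simp_rw [h]
  rw [MeasureTheory.integral_const_mul]

private lemma STFT_sum (g φ : 𝓢(EuclideanSpace ℝ (Fin n), ℂ)) (c : (Fin n → ℤ) →₀ ℂ)
    (zl : (Fin n → ℤ) → EuclideanSpace ℝ (Fin n)) (x ξ : EuclideanSpace ℝ (Fin n)) :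
    STFT (⇑g) (fun t => ∑ ℓ ∈ c.support, c ℓ * φ (t - zl ℓ)) x ξ =
      ∑ ℓ ∈ c.support, c ℓ * STFT (⇑g) (fun t => φ (t - zl ℓ)) x ξ := by
  unfold STFT
  have h : (fun t : EuclideanSpace ℝ (Fin n) =>
      Complex.exp (-(Complex.I * Complex.ofReal ⟪ξ, t⟫)) *
      (starRingEnd ℂ) (g (t - x)) * (∑ ℓ ∈ c.support, c ℓ * φ (t - zl ℓ))) =
      fun t : EuclideanSpace ℝ (Fin n) => ∑ ℓ ∈ c.support, c ℓ *
        (Complex.exp (-(Complex.I * Complex.ofReal ⟪ξ, t⟫)) *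
          (starRingEnd ℂ) (g (t - x)) * φ (t - zl ℓ)) := by
    funext t
    rw [Finset.mul_sum]
    exact Finset.sum_congr rfl fun ℓ _ => by ring
  rw [h, MeasureTheory.integral_finset_sum _ fun ℓ _ => integrable_term g φ x (zl ℓ) ξ (c ℓ)]
  exact Finset.sum_congr rfl fun ℓ _ => MeasureTheory.integral_const_mul _ _

private lemma per_term (g φ : 𝓢(EuclideanSpace ℝ (Fin n), ℂ)) {N D : ℕ} {s M : ℝ}
    (hMD : M ≤ (D : ℝ)) {C₀ : ℝ} (hC₀ : 0 < C₀)
    (hcore : ∀ x ξ : EuclideanSpace ℝ (Fin n),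
      (1 + ‖x‖) ^ D * ((1 + ‖ξ‖) ^ N * ‖STFT (⇑g) (⇑φ) x ξ‖) ≤ C₀)
    (x ξ z : EuclideanSpace ℝ (Fin n)) (a : ℂ) :
    jp s x * (‖a‖ * ‖STFT (⇑g) (⇑φ) (x - z) ξ‖) ≤
      C₀ * 2 ^ (|s| / 2) * jp (-(N : ℝ)) ξ * (jp s z * ‖a‖ * jp (-M + |s|) (x - z)) := by
  set y := x - z with hy
  have hP : (0:ℝ) < (1 + ‖y‖) ^ D := by positivity
  have hQ : (0:ℝ) < (1 + ‖ξ‖) ^ N := by positivity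
  have hS : ‖STFT (⇑g) (⇑φ) y ξ‖ ≤ C₀ * ((1 + ‖y‖) ^ D)⁻¹ * ((1 + ‖ξ‖) ^ N)⁻¹ := by
    have h := hcore y ξ
    rw [show (1 + ‖y‖) ^ D * ((1 + ‖ξ‖) ^ N * ‖STFT (⇑g) (⇑φ) y ξ‖) =
      ‖STFT (⇑g) (⇑φ) y ξ‖ * ((1 + ‖y‖) ^ D * (1 + ‖ξ‖) ^ N) by ring] at h
    rw [show C₀ * ((1 + ‖y‖) ^ D)⁻¹ * ((1 + ‖ξ‖) ^ N)⁻¹ =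
      C₀ / ((1 + ‖y‖) ^ D * (1 + ‖ξ‖) ^ N) by rw [div_eq_mul_inv, mul_inv]; ring]
    exact (le_div_iff₀ (by positivity)).2 h
  have h2 : ((1 + ‖y‖) ^ D)⁻¹ ≤ jp (-(D : ℝ)) y := inv_pow_le_jp_neg D y
  have h3 : ((1 + ‖ξ‖) ^ N)⁻¹ ≤ jp (-(N : ℝ)) ξ := inv_pow_le_jp_neg N ξ
  have h4 : jp s x ≤ 2 ^ (|s| / 2) * jp s z * jp |s| y := jp_peetre s x z
  have step1 : jp s x * (‖a‖ * ‖STFT (⇑g) (⇑φ) y ξ‖) ≤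
      jp s x * (‖a‖ * (C₀ * ((1 + ‖y‖) ^ D)⁻¹ * ((1 + ‖ξ‖) ^ N)⁻¹)) :=
    mul_le_mul_of_nonneg_left (mul_le_mul_of_nonneg_left hS (norm_nonneg a)) (jp_pos s x).le
  have step2 : jp s x * (‖a‖ * (C₀ * ((1 + ‖y‖) ^ D)⁻¹ * ((1 + ‖ξ‖) ^ N)⁻¹)) ≤
      (2 ^ (|s| / 2) * jp s z * jp |s| y) *
        (‖a‖ * (C₀ * jp (-(D : ℝ)) y * jp (-(N : ℝ)) ξ)) := by
    have hinner : C₀ * ((1 + ‖y‖) ^ D)⁻¹ * ((1 + ‖ξ‖) ^ N)⁻¹ ≤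
        C₀ * jp (-(D : ℝ)) y * jp (-(N : ℝ)) ξ := by
      apply mul_le_mul (mul_le_mul_of_nonneg_left h2 hC₀.le) h3 (by positivity)
      exact mul_nonneg hC₀.le (jp_pos _ _).le
    apply mul_le_mul h4 (mul_le_mul_of_nonneg_left hinner (norm_nonneg a))
    · exact mul_nonneg (norm_nonneg a) (by positivity)
    · exact mul_nonneg (mul_nonneg (by positivity) (jp_pos _ _).le) (jp_pos _ _).le
  have step3 : (2 ^ (|s| / 2) * jp s z * jp |s| y) *
        (‖a‖ * (C₀ * jp (-(D : ℝ)) y * jp (-(N : ℝ)) ξ)) =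
      C₀ * 2 ^ (|s| / 2) * jp (-(N : ℝ)) ξ * (jp s z * ‖a‖ * (jp |s| y * jp (-(D : ℝ)) y)) := by
    ring
  have step4 : jp |s| y * jp (-(D : ℝ)) y ≤ jp (-M + |s|) y := by
    rw [jp_mul]
    exact jp_mono y (by linarith)
  calc jp s x * (‖a‖ * ‖STFT (⇑g) (⇑φ) y ξ‖) ≤
      (2 ^ (|s| / 2) * jp s z * jp |s| y) *
        (‖a‖ * (C₀ * jp (-(D : ℝ)) y * jp (-(N : ℝ)) ξ)) := step1.trans step2
    _ = C₀ * 2 ^ (|s| / 2) * jp (-(N : ℝ)) ξ *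
        (jp s z * ‖a‖ * (jp |s| y * jp (-(D : ℝ)) y)) := step3
    _ ≤ C₀ * 2 ^ (|s| / 2) * jp (-(N : ℝ)) ξ * (jp s z * ‖a‖ * jp (-M + |s|) y) := by
        apply mul_le_mul_of_nonneg_left _ ?_
        · exact mul_le_mul_of_nonneg_left step4
            (mul_nonneg (jp_pos _ _).le (norm_nonneg a))
        · exact mul_nonneg (mul_nonneg hC₀.le (by positivity)) (jp_pos _ _).le

end Aux2


/-- Pointwise weighted bound for the STFT of `f = Σ_ℓ c_ℓ φ(· - ℓ)`:
`⟨x⟩^s |V_g f (x,ξ)| ≤ C ⟨ξ⟩^{-N} Σ_ℓ ⟨ℓ⟩^s |c_ℓ| ⟨x-ℓ⟩^{-M+|s|}`. -/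
theorem stft_weighted_pointwise_bound (n : ℕ) (hn : 1 ≤ n) (s : ℝ)
    (g φ : SchwartzMap (EuclideanSpace ℝ (Fin n)) ℂ) (N : ℕ) (M : ℝ) (hM : 0 ≤ M) :
    ∃ C : ℝ, 0 < C ∧ ∀ c : (Fin n → ℤ) →₀ ℂ, ∀ x ξ : EuclideanSpace ℝ (Fin n),
      jp s x * ‖STFT ⇑g (fun t => ∑ ℓ ∈ c.support, c ℓ * φ (t - zlift ℓ)) x ξ‖
        ≤ C * jp (-(N : ℝ)) ξ *
            ∑ ℓ ∈ c.support, jp s (zlift ℓ) * ‖c ℓ‖ * jp (-M + |s|) (x - zlift ℓ) := by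
  obtain ⟨C₀, hC₀, hcore⟩ := core_decay g φ N ⌈M⌉₊
  have hMD : M ≤ ((⌈M⌉₊ : ℕ) : ℝ) := Nat.le_ceil M
  refine ⟨C₀ * 2 ^ (|s| / 2), mul_pos hC₀ (by positivity), fun c x ξ => ?_⟩
  rw [STFT_sum g φ c zlift x ξ]
  have hterm : ∀ ℓ ∈ c.support,
      jp s x * (‖c ℓ‖ * ‖STFT (⇑g) (⇑φ) (x - zlift ℓ) ξ‖) ≤
      C₀ * 2 ^ (|s| / 2) * jp (-(N : ℝ)) ξ *
        (jp s (zlift ℓ) * ‖c ℓ‖ * jp (-M + |s|) (x - zlift ℓ)) :=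
    fun ℓ _ => per_term g φ hMD hC₀ hcore x ξ (zlift ℓ) (c ℓ)
  calc jp s x * ‖∑ ℓ ∈ c.support, c ℓ * STFT (⇑g) (fun t => φ (t - zlift ℓ)) x ξ‖
      ≤ jp s x * ∑ ℓ ∈ c.support, ‖c ℓ‖ * ‖STFT (⇑g) (⇑φ) (x - zlift ℓ) ξ‖ := by
        apply mul_le_mul_of_nonneg_left _ (jp_pos s x).le
        refine (norm_sum_le _ _).trans ?_
        apply Finset.sum_le_sum
        intro ℓ _
        rw [norm_mul, STFT_shift g φ x (zlift ℓ) ξ, norm_mul, norm_exp_inner, one_mul]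
    _ = ∑ ℓ ∈ c.support, jp s x * (‖c ℓ‖ * ‖STFT (⇑g) (⇑φ) (x - zlift ℓ) ξ‖) := by
        rw [Finset.mul_sum]
    _ ≤ ∑ ℓ ∈ c.support, C₀ * 2 ^ (|s| / 2) * jp (-(N : ℝ)) ξ *
          (jp s (zlift ℓ) * ‖c ℓ‖ * jp (-M + |s|) (x - zlift ℓ)) := Finset.sum_le_sum hterm
    _ = C₀ * 2 ^ (|s| / 2) * jp (-(N : ℝ)) ξ *
          ∑ ℓ ∈ c.support, jp s (zlift ℓ) * ‖c ℓ‖ * jp (-M + |s|) (x - zlift ℓ) := by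
        rw [Finset.mul_sum]

end
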